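/- Let b, c, e be real (or complex) parameters with e not a nonpositive integer, and let z(x,y) = Ξ₂(b,c;e;x,y). Then on the domain |x| < 1 (all y), z satisfies the partial differential equation y z_yy + x z_xy + e z_y - z = 0. -/

import Mathlib

noncomputable section

/-- The Pochhammer symbol `(a)_k = a (a+1) ⋯ (a+k-1)`. -/
def poch (a : ℝ) (k : ℕ) : ℝ := ∏ i ∈ Finset.range k, (a + i)
/-- The Humbert confluent hypergeometric function
`Ξ₂(a,b;d;u,w) = ∑_{m,n≥0} (a)_m (b)_m / (m! n! (d)_{m+n}) u^m w^n`. -/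
def Xi2 (a b d u w : ℝ) : ℝ :=
  ∑' mn : ℕ × ℕ,
    poch a mn.1 * poch b mn.1 /
      (mn.1.factorial * mn.2.factorial * poch d (mn.1 + mn.2)) * u ^ mn.1 * w ^ mn.2

/-!
Write `Ξ₂(b,c;e;x,y) = ∑ A_{m,n} x^m y^n`. The coefficients satisfy
`A_{m,n} = (n+1)(e+m+n) A_{m,n+1}`, and the operator `y ∂_y² + x ∂_x ∂_y + e ∂_y` sends
`x^m y^(n+1)` to `(n+1)(e+m+n) x^m y^n`; so termwise the left-hand side of the equation is the
series of `z` shifted by one in `n`, and the two cancel.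

Termwise differentiation is justified by absolute convergence of `∑ |A_{m,n}| q^m r^n` for
`q < 1`: since `|a+k|/(k+1) → 1`, Pochhammer symbols satisfy `|(a)_k| ≤ C σ⁻ᵏ k!` and, when `e`
is not a nonpositive integer, `σᵏ k! ≤ C |(e)_k|` for every `σ < 1`.
-/

open Filter

theorem exists_forall_le_of_eventually_succ_le {α : Type*} [Preorder α] [IsDirectedOrder α]
    {u : ℕ → α} (h : ∀ᶠ k in atTop, u (k + 1) ≤ u k) : ∃ C, ∀ k, u k ≤ C := by
  obtain ⟨N, hN⟩ := eventually_atTop.1 h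
  have hle : ∀ᶠ k in atTop, u k ≤ u N := eventually_atTop.2
    ⟨N, fun k hk => antitoneOn_nat_Ici_of_succ_le hN (le_refl N) hk hk⟩
  obtain ⟨C, hC⟩ := (isBoundedUnder_of_eventually_le hle).bddAbove_range
  exact ⟨C, fun k => hC ⟨k, rfl⟩⟩

section Pochhammer

theorem poch_succ (a : ℝ) (k : ℕ) : poch a (k + 1) = poch a k * (a + k) :=
  Finset.prod_range_succ _ _

theorem poch_ne_zero {a : ℝ} (ha : ∀ k : ℕ, a ≠ -(k : ℝ)) (k : ℕ) : poch a k ≠ 0 :=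
  Finset.prod_ne_zero_iff.2 fun i _ h => ha i (by linarith)

theorem exists_abs_poch_le (a : ℝ) {θ : ℝ} (hθ : 1 < θ) :
    ∃ C, ∀ k, |poch a k| ≤ C * θ ^ k * k.factorial := by
  have hratio : ∀ᶠ k : ℕ in atTop, |a + k| ≤ θ * (k + 1) := by
    filter_upwards [tendsto_natCast_atTop_atTop.eventually_ge_atTop (|a| / (θ - 1))] with k hk
    rw [div_le_iff₀ (by linarith)] at hk
    nlinarith [abs_add_le a k, abs_of_nonneg (Nat.cast_nonneg (α := ℝ) k)]
  obtain ⟨C, hC⟩ := exists_forall_le_of_eventually_succ_le (u := fun k =>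
    |poch a k| / (θ ^ k * k.factorial)) <| by
    filter_upwards [hratio] with k hk
    have hstep : |poch a (k + 1)| / (θ ^ (k + 1) * (k + 1).factorial)
        = |poch a k| / (θ ^ k * k.factorial) * (|a + k| / (θ * (k + 1))) := by
      rw [poch_succ, Nat.factorial_succ, abs_mul]; push_cast; field_simp; ring
    rw [hstep]
    exact mul_le_of_le_one_right (by positivity) (div_le_one_of_le₀ hk (by positivity))
  refine ⟨C, fun k => ?_⟩
  have := hC k
  rw [div_le_iff₀ (by positivity)] at this
  linarith

theorem exists_le_mul_abs_poch {a : ℝ} (ha : ∀ k : ℕ, a ≠ -(k : ℝ)) {σ : ℝ} (hσ0 : 0 < σ)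
    (hσ1 : σ < 1) : ∃ C, ∀ k, σ ^ k * k.factorial ≤ C * |poch a k| := by
  have hratio : ∀ᶠ k : ℕ in atTop, σ * (k + 1) ≤ |a + k| := by
    filter_upwards [tendsto_natCast_atTop_atTop.eventually_ge_atTop ((σ + |a|) / (1 - σ))]
      with k hk
    rw [div_le_iff₀ (by linarith)] at hk
    nlinarith [neg_abs_le a, le_abs_self (a + k)]
  obtain ⟨C, hC⟩ := exists_forall_le_of_eventually_succ_le (u := fun k =>
    σ ^ k * k.factorial / |poch a k|) <| by
    filter_upwards [hratio] with k hk
    have hstep : σ ^ (k + 1) * (k + 1).factorial / |poch a (k + 1)|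
        = σ ^ k * k.factorial / |poch a k| * (σ * (k + 1) / |a + k|) := by
      rw [poch_succ, Nat.factorial_succ, abs_mul]; push_cast; ring
    rw [hstep]
    exact mul_le_of_le_one_right (by positivity) (div_le_one_of_le₀ hk (abs_nonneg _))
  refine ⟨C, fun k => ?_⟩
  have := hC k
  rwa [div_le_iff₀ (abs_pos.2 (poch_ne_zero ha k))] at this

end Pochhammer

section Coefficients

/-- By definition `Xi2 a b d u w = ∑' mn, xi2Coeff a b d mn * u ^ mn.1 * w ^ mn.2`. -/
def xi2Coeff (a b d : ℝ) (mn : ℕ × ℕ) : ℝ :=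
  poch a mn.1 * poch b mn.1 / (mn.1.factorial * mn.2.factorial * poch d (mn.1 + mn.2))

theorem xi2Coeff_eq_mul_xi2Coeff_succ (a b : ℝ) {d : ℝ} (hd : ∀ k : ℕ, d ≠ -(k : ℝ))
    (m n : ℕ) :
    xi2Coeff a b d (m, n) = (n + 1) * (d + m + n) * xi2Coeff a b d (m, n + 1) := by
  have hd' : d + ((m : ℝ) + n) ≠ 0 := fun h => hd (m + n) (by push_cast; linarith)
  have := poch_ne_zero hd (m + n)
  simp only [xi2Coeff, ← add_assoc, poch_succ, Nat.factorial_succ]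
  push_cast
  field_simp
  ring

theorem summable_abs_xi2Coeff (a b : ℝ) {d : ℝ} (hd : ∀ k : ℕ, d ≠ -(k : ℝ)) {q r : ℝ}
    (hq0 : 0 ≤ q) (hq1 : q < 1) (hr : 0 ≤ r) :
    Summable fun mn : ℕ × ℕ => |xi2Coeff a b d mn| * q ^ mn.1 * r ^ mn.2 := by
  -- the majorant below is geometric in `m` with ratio `q / σ ^ 3`
  obtain ⟨σ, hσ0, hσ1, hqσ⟩ : ∃ σ : ℝ, 0 < σ ∧ σ < 1 ∧ q < σ ^ 3 :=
    ⟨(3 + q) / 4, by linarith, by linarith,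
      by nlinarith [mul_nonneg hq0 (sq_nonneg (1 - q)), sub_pos.2 hq1]⟩
  obtain ⟨Ca, hCa⟩ := exists_abs_poch_le a (one_lt_inv₀ hσ0 |>.2 hσ1)
  obtain ⟨Cb, hCb⟩ := exists_abs_poch_le b (one_lt_inv₀ hσ0 |>.2 hσ1)
  obtain ⟨Cd, hCd⟩ := exists_le_mul_abs_poch hd hσ0 hσ1
  have hCd0 : 0 < Cd := by
    have := hCd 0
    simp [poch] at this
    linarith
  have hcoeff : ∀ m n : ℕ, |xi2Coeff a b d (m, n)| * q ^ m * r ^ n ≤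
      Ca * Cb * Cd * ((q / σ ^ 3) ^ m * ((r / σ) ^ n / n.factorial)) := by
    intro m n
    have hd_low : σ ^ (m + n) * m.factorial ≤ Cd * |poch d (m + n)| :=
      le_trans (mul_le_mul_of_nonneg_left (by exact_mod_cast Nat.factorial_le (m.le_add_right n))
        (by positivity)) (hCd (m + n))
    have hA : |xi2Coeff a b d (m, n)| * q ^ m * r ^ n
        = |poch a m| * |poch b m| / (m.factorial * n.factorial * |poch d (m + n)|)
          * (q ^ m * r ^ n) := by
      simp only [xi2Coeff, abs_div, abs_mul, Nat.abs_cast]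
      ring
    have hCa0 : 0 ≤ Ca * σ⁻¹ ^ m * m.factorial := (abs_nonneg _).trans (hCa m)
    have hCb0 : 0 ≤ Cb * σ⁻¹ ^ m * m.factorial := (abs_nonneg _).trans (hCb m)
    calc |xi2Coeff a b d (m, n)| * q ^ m * r ^ n
        ≤ (Ca * σ⁻¹ ^ m * m.factorial) * (Cb * σ⁻¹ ^ m * m.factorial)
          / (m.factorial * n.factorial * (σ ^ (m + n) * m.factorial / Cd))
          * (q ^ m * r ^ n) := by
          rw [hA]
          gcongr ?_ * _
          refine div_le_div₀ (mul_nonneg hCa0 hCb0)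
            (mul_le_mul (hCa m) (hCb m) (abs_nonneg _) hCa0) (by positivity) ?_
          gcongr
          rwa [div_le_iff₀' hCd0]
      _ = Ca * Cb * Cd * ((q / σ ^ 3) ^ m * ((r / σ) ^ n / n.factorial)) := by
          rw [inv_pow, div_pow, div_pow, ← pow_mul, pow_add]
          field_simp
          ring
  refine .of_nonneg_of_le (fun _ => by positivity) (fun mn => hcoeff mn.1 mn.2) ?_
  refine .mul_left _ <| .mul_of_nonneg (f := fun m : ℕ => (q / σ ^ 3) ^ m)
    (g := fun n : ℕ => (r / σ) ^ n / n.factorial) ?_ (Real.summable_pow_div_factorial _)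
    (fun _ => by positivity) (fun _ => by positivity)
  exact summable_geometric_of_lt_one (by positivity) ((div_lt_one (by positivity)).2 hqσ)

end Coefficients

theorem natCast_mul_pow_sub_one_le {r R : ℝ} (hr : 0 ≤ r) (hrR : r < R) (n : ℕ) :
    n * r ^ (n - 1) ≤ R ^ n / (R - r) := by
  rw [le_div_iff₀ (sub_pos.2 hrR)]
  induction n with
  | zero => simp
  | succ n ih =>
    rcases Nat.eq_zero_or_pos n with rfl | hn
    · simpa using hr
    have hpow : r ^ n ≤ R ^ n := pow_le_pow_left₀ hr hrR.le n
    calc ((n + 1 : ℕ) : ℝ) * r ^ (n + 1 - 1) * (R - r)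
        = r * (n * r ^ (n - 1) * (R - r)) + r ^ n * (R - r) := by
          rw [Nat.add_sub_cancel, ← mul_pow_sub_one hn.ne' r]; push_cast; ring
      _ ≤ r * R ^ n + R ^ n * (R - r) := by gcongr
      _ = R ^ (n + 1) := by ring

theorem mul_natCast_mul_pow_sub_one {R : Type*} [CommSemiring R] (x : R) (n : ℕ) :
    x * (n * x ^ (n - 1)) = n * x ^ n := by
  cases n with
  | zero => simp
  | succ n => rw [Nat.add_sub_cancel, pow_succ]; ring

section DoubleSeries

variable {ι : Type*} {a : ι → ℝ} {k l : ι → ℕ}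

theorem summable_mul_pow_mul_pow_of_abs_le {Q R x y : ℝ}
    (h : Summable fun i => |a i| * Q ^ k i * R ^ l i) (hx : |x| ≤ Q) (hy : |y| ≤ R) :
    Summable fun i => a i * x ^ k i * y ^ l i :=
  .of_norm_bounded h fun i => by
    have := (abs_nonneg x).trans hx
    simp only [Real.norm_eq_abs, abs_mul, abs_pow]
    gcongr

theorem summable_abs_mul_natCast_snd {Q R R' : ℝ} (hQ : 0 ≤ Q) (hR' : 0 ≤ R') (hR'R : R' < R)
    (h : Summable fun i => |a i| * Q ^ k i * R ^ l i) :
    Summable fun i => |a i * l i| * Q ^ k i * R' ^ (l i - 1) :=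
  .of_nonneg_of_le (fun i => by positivity) (fun i => by
    calc |a i * l i| * Q ^ k i * R' ^ (l i - 1)
        = |a i| * Q ^ k i * (l i * R' ^ (l i - 1)) := by rw [abs_mul, Nat.abs_cast]; ring
      _ ≤ |a i| * Q ^ k i * (R ^ l i / (R - R')) := by
        gcongr; exact natCast_mul_pow_sub_one_le hR' hR'R _
      _ = |a i| * Q ^ k i * R ^ l i / (R - R') := by ring)
    (h.div_const _)

theorem summable_abs_mul_natCast_fst {Q Q' R : ℝ} (hR : 0 ≤ R) (hQ' : 0 ≤ Q') (hQ'Q : Q' < Q)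
    (h : Summable fun i => |a i| * Q ^ k i * R ^ l i) :
    Summable fun i => |a i * k i| * Q' ^ (k i - 1) * R ^ l i :=
  (summable_abs_mul_natCast_snd (k := l) (l := k) hR hQ' hQ'Q (h.congr fun i => by ring)).congr
    fun i => by ring

theorem hasDerivAt_tsum_mul_pow_mul_pow_snd {x y R : ℝ}
    (h : Summable fun i => |a i| * |x| ^ k i * R ^ l i) (hy : |y| < R) :
    HasDerivAt (fun y => ∑' i, a i * x ^ k i * y ^ l i)
      (∑' i, a i * l i * x ^ k i * y ^ (l i - 1)) y := by
  set r := (|y| + R) / 2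
  have hyr : |y| < r := by simp only [r]; linarith
  have hrR : r < R := by simp only [r]; linarith
  have hr : 0 ≤ r := (abs_nonneg y).trans hyr.le
  have hy_mem : y ∈ Metric.ball (0 : ℝ) r := by rwa [mem_ball_zero_iff, Real.norm_eq_abs]
  refine hasDerivAt_tsum_of_isPreconnected (g := fun i s => a i * x ^ k i * s ^ l i)
    (g' := fun i s => a i * l i * x ^ k i * s ^ (l i - 1))
    (h.div_const (R - r)) Metric.isOpen_ball (convex_ball 0 r).isPreconnected
    (fun i s _ => ?_) (fun i s hs => ?_) hy_mem
    (summable_mul_pow_mul_pow_of_abs_le h le_rfl (hyr.trans hrR).le) hy_mem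
  · exact ((hasDerivAt_pow (l i) s).const_mul (a i * x ^ k i)).congr_deriv (by ring)
  · have hs : |s| ≤ r := by simpa using (mem_ball_zero_iff.1 hs).le
    calc ‖a i * l i * x ^ k i * s ^ (l i - 1)‖
        = |a i| * |x| ^ k i * (l i * |s| ^ (l i - 1)) := by
          simp only [Real.norm_eq_abs, abs_mul, abs_pow, Nat.abs_cast]; ring
      _ ≤ |a i| * |x| ^ k i * (R ^ l i / (R - r)) := by
          gcongr
          exact (by gcongr : (l i : ℝ) * |s| ^ (l i - 1) ≤ l i * r ^ (l i - 1)).trans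
            (natCast_mul_pow_sub_one_le hr hrR _)
      _ = |a i| * |x| ^ k i * R ^ l i / (R - r) := by ring

theorem hasDerivAt_tsum_mul_pow_mul_pow_fst {x y Q : ℝ}
    (h : Summable fun i => |a i| * Q ^ k i * |y| ^ l i) (hx : |x| < Q) :
    HasDerivAt (fun x => ∑' i, a i * x ^ k i * y ^ l i)
      (∑' i, a i * k i * x ^ (k i - 1) * y ^ l i) x := by
  have := hasDerivAt_tsum_mul_pow_mul_pow_snd (k := l) (l := k) (h.congr fun i => by ring) hx
  convert this using 1
  · ext x
    exact tsum_congr fun i => by ring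
  · exact tsum_congr fun i => by ring

end DoubleSeries

theorem tsum_eq_tsum_snd_succ {α M : Type*} [AddCommMonoid M] [TopologicalSpace M]
    {f : α × ℕ → M} (hf : ∀ m, f (m, 0) = 0) :
    ∑' mn : α × ℕ, f mn = ∑' mn : α × ℕ, f (mn.1, mn.2 + 1) := by
  refine (Function.Injective.tsum_eq (g := Prod.map id Nat.succ)
    (Function.injective_id.prodMap Nat.succ_injective) fun mn hmn => ?_).symm
  obtain ⟨m, _ | n⟩ := mn
  · exact absurd (hf m) hmn
  · exact ⟨(m, n), rfl⟩

section Xi2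

variable (a b : ℝ) {d : ℝ}

theorem deriv_Xi2_snd (hd : ∀ k : ℕ, d ≠ -(k : ℝ)) {x : ℝ} (hx : |x| < 1) (y : ℝ) :
    deriv (fun y => Xi2 a b d x y) y =
      ∑' mn : ℕ × ℕ, xi2Coeff a b d mn * mn.2 * x ^ mn.1 * y ^ (mn.2 - 1) :=
  (hasDerivAt_tsum_mul_pow_mul_pow_snd
    (summable_abs_xi2Coeff a b hd (abs_nonneg x) hx (by positivity)) (lt_add_one |y|)).deriv

theorem deriv_Xi2_fst (hd : ∀ k : ℕ, d ≠ -(k : ℝ)) {x : ℝ} (hx : |x| < 1) (y : ℝ) :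
    deriv (fun x => Xi2 a b d x y) x =
      ∑' mn : ℕ × ℕ, xi2Coeff a b d mn * mn.1 * x ^ (mn.1 - 1) * y ^ mn.2 := by
  obtain ⟨Q, hxQ, hQ1⟩ := exists_between hx
  exact (hasDerivAt_tsum_mul_pow_mul_pow_fst
    (summable_abs_xi2Coeff a b hd ((abs_nonneg x).trans hxQ.le) hQ1 (abs_nonneg y)) hxQ).deriv

theorem xi2Coeff_pde_term (hd : ∀ k : ℕ, d ≠ -(k : ℝ)) (x y : ℝ) (m n : ℕ) :
    y * (xi2Coeff a b d (m, n + 1) * (n + 1) * n * x ^ m * y ^ (n - 1)) +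
        x * (xi2Coeff a b d (m, n + 1) * m * (n + 1) * x ^ (m - 1) * y ^ n) +
        d * (xi2Coeff a b d (m, n + 1) * (n + 1) * x ^ m * y ^ n) =
      xi2Coeff a b d (m, n) * x ^ m * y ^ n := by
  rw [xi2Coeff_eq_mul_xi2Coeff_succ a b hd m n]
  linear_combination
    (xi2Coeff a b d (m, n + 1) * (n + 1) * x ^ m) * mul_natCast_mul_pow_sub_one y n +
      (xi2Coeff a b d (m, n + 1) * (n + 1) * y ^ n) * mul_natCast_mul_pow_sub_one x m

end Xi2

/-- The Humbert function `z(x,y) = Ξ₂(b,c;e;x,y)` satisfies, for `|x| < 1` and all `y`,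
`y z_yy + x z_xy + e z_y - z = 0`. -/
theorem Xi2_pde_second (b c e : ℝ) (he : ∀ k : ℕ, e ≠ -(k : ℝ))
    (x y : ℝ) (hx : |x| < 1) :
    y * deriv (deriv (fun y' : ℝ => Xi2 b c e x y')) y +
      x * deriv (fun y' : ℝ => deriv (fun x' : ℝ => Xi2 b c e x' y') x) y +
      e * deriv (fun y' : ℝ => Xi2 b c e x y') y -
      Xi2 b c e x y = 0 := by
  obtain ⟨Q, hxQ, hQ1⟩ := exists_between hx
  have hA {q r : ℝ} (hq0 : 0 ≤ q) (hq1 : q < 1) (hr : 0 ≤ r) :=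
    summable_abs_xi2Coeff b c he hq0 hq1 hr
  have hR : 0 ≤ |y| + 1 := by positivity
  have h1 := summable_abs_mul_natCast_snd (abs_nonneg x) hR (lt_add_one _)
    (hA (abs_nonneg x) hx (by positivity))
  have h3 := summable_abs_mul_natCast_fst hR (abs_nonneg x) hxQ
    (hA ((abs_nonneg x).trans hxQ.le) hQ1 hR)
  rw [funext (deriv_Xi2_snd b c he hx), funext (deriv_Xi2_fst b c he hx),
    (hasDerivAt_tsum_mul_pow_mul_pow_snd h1 (lt_add_one _)).deriv,
    (hasDerivAt_tsum_mul_pow_mul_pow_snd h3 (lt_add_one _)).deriv]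
  have s1 := summable_mul_pow_mul_pow_of_abs_le h1 le_rfl (lt_add_one _).le
  have s2 := summable_mul_pow_mul_pow_of_abs_le
    (summable_abs_mul_natCast_snd (abs_nonneg x) (abs_nonneg y) (lt_add_one _) h1) le_rfl le_rfl
  have s3 := summable_mul_pow_mul_pow_of_abs_le
    (summable_abs_mul_natCast_snd (abs_nonneg x) (abs_nonneg y) (lt_add_one _) h3) le_rfl le_rfl
  rw [← tsum_mul_left, ← tsum_mul_left, ← tsum_mul_left,
    ← (s2.mul_left y).tsum_add (s3.mul_left x),
    ← ((s2.mul_left y).add (s3.mul_left x)).tsum_add (s1.mul_left e), sub_eq_zero,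
    tsum_eq_tsum_snd_succ (by simp)]
  refine tsum_congr fun ⟨m, n⟩ => ?_
  simp only [Nat.add_sub_cancel, Nat.cast_add, Nat.cast_one]
  exact xi2Coeff_pde_term b c he x y m n

end
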